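/- arXiv:2105.04204 — 2 statements merged into one kernel-verified Lean document; each statement's English description precedes it below -/
import Mathlib

section
/- Let a ≥ 5 and write a = 3A + a₀ with A a nonnegative integer and a₀ ∈ {0,1,2}. Then N_{K/ℚ}(α(v,W)) < N_{K/ℚ}(α(v+1,W)) for all integers v, W with 0 ≤ v ≤ A−1 and v+1 ≤ W ≤ 3A + a₀ − 2v − 3. -/
open IntermediateField

noncomputable section

/-- The element `α(v,W) = −v − (v(a+2) + 1 + W)ρ + (v+1)ρ²` of `ℚ(ρ) ⊆ ℝ`,
where `ρ` is the (largest real) root of the simplest cubic polynomial. -/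
def alphaS (a : ℤ) (ρ : ℝ) (v W : ℤ) : ℚ⟮ρ⟯ :=
  -((v : ℤ) : ℚ⟮ρ⟯) - ((v * (a + 2) + 1 + W : ℤ) : ℚ⟮ρ⟯) * AdjoinSimple.gen ℚ ρ
    + ((v + 1 : ℤ) : ℚ⟮ρ⟯) * AdjoinSimple.gen ℚ ρ ^ 2

/-- The norm of `α(v,W)` as an explicit integer polynomial in `a, v, W`. -/
lemma norm_alphaS (a : ℤ) (ρ : ℝ)
    (hroot : ρ ^ 3 - (a : ℝ) * ρ ^ 2 - ((a : ℝ) + 3) * ρ - 1 = 0)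
    (hdeg : Module.finrank ℚ ℚ⟮ρ⟯ = 3) (v W : ℤ) :
    Algebra.norm ℚ (alphaS a ρ v W) =
      ((v^3 - 3*v^2 + 3 - 3*W^2 - W^3 - 3*v*W - 3*v*W^2 + 2*a + 3*a*W + a*W^2
        + 3*a*v + a*v*W - a*v*W^2 - 2*a*v^2 - a*v^2*W + a^2*v + a^2*v*W : ℤ) : ℚ) := by
  have hfin : FiniteDimensional ℚ ℚ⟮ρ⟯ :=
    Module.finite_of_finrank_pos (by rw [hdeg]; norm_num)
  have hint : IsIntegral ℚ ρ := by
    have h := (IsIntegral.of_finite ℚ (AdjoinSimple.gen ℚ ρ)).algebraMap (B := ℝ)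
    rwa [AdjoinSimple.algebraMap_gen] at h
  set g : ℚ⟮ρ⟯ := AdjoinSimple.gen ℚ ρ with hg
  have hgρ : (g : ℝ) = ρ := rfl
  -- the cubic relation, inside `ℚ⟮ρ⟯`
  have hcube : g ^ 3 = (a : ℚ⟮ρ⟯) * g ^ 2 + ((a : ℚ⟮ρ⟯) + ((3 : ℤ) : ℚ⟮ρ⟯)) * g + 1 := by
    have : ((g ^ 3 : ℚ⟮ρ⟯) : ℝ)
        = (((a : ℚ⟮ρ⟯) * g ^ 2 + ((a : ℚ⟮ρ⟯) + ((3 : ℤ) : ℚ⟮ρ⟯)) * g + 1 : ℚ⟮ρ⟯) : ℝ) := by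
      have h3 : (((3 : ℚ⟮ρ⟯)) : ℝ) = 3 := by norm_cast
      push_cast [h3]
      rw [hgρ]
      linear_combination hroot
    exact_mod_cast this
  -- power basis of `ℚ⟮ρ⟯`
  set pb := IntermediateField.adjoin.powerBasis hint with hpb
  have hgen : pb.gen = g := rfl
  have hdim : pb.dim = 3 := by rw [← pb.finrank, hdeg]
  set b : Module.Basis (Fin 3) ℚ ℚ⟮ρ⟯ := pb.basis.reindex (finCongr hdim) with hbdef
  have hb : ∀ i : Fin 3, b i = g ^ (i : ℕ) := by
    intro i
    rw [hbdef, Module.Basis.reindex_apply, pb.basis_eq_pow, hgen]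
    congr 1
  -- the multiplication matrix of `α(v,W)` in this basis
  set c : ℚ := ((v * (a + 2) + 1 + W : ℤ) : ℚ) with hc
  set M : Matrix (Fin 3) (Fin 3) ℚ :=
    !![ -(v : ℚ), (v : ℚ) + 1, ((v : ℚ)+1)*(a : ℚ) - c;
        -c, ((v : ℚ)+1)*((a : ℚ)+3) - (v : ℚ),
          ((v : ℚ)+1)*((a : ℚ)^2+3*(a : ℚ)+1) - c*((a : ℚ)+3);
        (v : ℚ) + 1, ((v : ℚ)+1)*(a : ℚ) - c,
          ((v : ℚ)+1)*((a : ℚ)^2+(a : ℚ)+3) - c*(a : ℚ) - (v : ℚ)] with hMdef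
  have key : ∀ j, alphaS a ρ v W * b j = ∑ i, M i j • b i := by
    intro j
    have e0 : b 0 = 1 := by rw [hb 0]; norm_num
    have e1 : b 1 = g := by rw [hb 1]; norm_num
    have e2 : b 2 = g ^ 2 := by rw [hb 2]; norm_num
    fin_cases j <;>
      simp [alphaS, ← hg, Fin.sum_univ_three, e0, e1, e2, hMdef, hc,
        Algebra.smul_def, map_sub, map_mul, map_add, map_one, map_intCast, map_neg,
        map_ofNat, map_pow] <;>
      push_cast
    · ring
    · linear_combination ((v : ℚ⟮ρ⟯) + 1) * hcube
    · linear_combination (((v : ℚ⟮ρ⟯) + 1) * (g + (a : ℚ⟮ρ⟯))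
        - ((v : ℚ⟮ρ⟯) * ((a : ℚ⟮ρ⟯) + 2) + 1 + (W : ℚ⟮ρ⟯))) * hcube
  have hM : Algebra.leftMulMatrix b (alphaS a ρ v W) = M := by
    ext i j
    rw [Algebra.leftMulMatrix_eq_repr_mul, key j]
    exact congrFun (b.repr_sum_self fun i => M i j) i
  rw [Algebra.norm_eq_matrix_det b, hM, Matrix.det_fin_three]
  simp only [hMdef, hc]
  norm_num [Matrix.cons_val_zero, Matrix.cons_val_one, Matrix.head_cons,
    Matrix.cons_val_two, Matrix.tail_cons, Matrix.cons_val', Matrix.empty_val',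
    Matrix.cons_val_fin_one, Matrix.head_fin_const, Matrix.of_apply]
  push_cast
  ring

/-- Let `a ≥ 5`, `a = 3A + a₀` with `A ≥ 0`, `a₀ ∈ {0,1,2}`. Then
`N(α(v,W)) < N(α(v+1,W))` for all integers `v, W` with `0 ≤ v ≤ A−1` and
`v+1 ≤ W ≤ 3A + a₀ − 2v − 3`. -/
theorem stmt_2 (a A a₀ : ℤ) (ha : 5 ≤ a) (hA : 0 ≤ A)
    (ha₀ : a₀ = 0 ∨ a₀ = 1 ∨ a₀ = 2) (haA : a = 3 * A + a₀)
    (ρ : ℝ) (hroot : ρ ^ 3 - (a : ℝ) * ρ ^ 2 - ((a : ℝ) + 3) * ρ - 1 = 0)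
    (hmax : ∀ x : ℝ, x ^ 3 - (a : ℝ) * x ^ 2 - ((a : ℝ) + 3) * x - 1 = 0 → x ≤ ρ)
    (hdeg : Module.finrank ℚ ℚ⟮ρ⟯ = 3)
    (v W : ℤ) (hv0 : 0 ≤ v) (hv1 : v ≤ A - 1)
    (hW0 : v + 1 ≤ W) (hW1 : W ≤ 3 * A + a₀ - 2 * v - 3) :
    Algebra.norm ℚ (alphaS a ρ v W) < Algebra.norm ℚ (alphaS a ρ (v + 1) W) := by
  rw [norm_alphaS a ρ hroot hdeg, norm_alphaS a ρ hroot hdeg, Int.cast_lt]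
  have hs : 0 ≤ a - W - 2 * v - 3 := by omega
  have ht : 0 ≤ W - v - 1 := by omega
  nlinarith [mul_nonneg hs ht, mul_nonneg hs hv0, mul_nonneg ht hv0,
    mul_nonneg (mul_nonneg hs ht) hv0, mul_nonneg (mul_nonneg hs hs) ht,
    mul_nonneg (mul_nonneg ht ht) hs, mul_nonneg (mul_nonneg hv0 hv0) hs,
    mul_nonneg (mul_nonneg hv0 hv0) ht, mul_nonneg (mul_nonneg hs hs) hv0,
    mul_nonneg (mul_nonneg ht ht) hv0, mul_nonneg hs hs, mul_nonneg ht ht,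
    mul_nonneg hv0 hv0]
end
end

section
/- Let a ≥ 5 and write a = 3A + a₀ with A a nonnegative integer and a₀ ∈ {0,1,2}. Then N_{K/ℚ}(α(v, 3A + a₀ − 2v − 1)) < N_{K/ℚ}(α(v+1, 3A + a₀ − 2(v+1) − 1)) for all integers v with 0 ≤ v ≤ A−2. -/
open IntermediateField

noncomputable section

open Polynomial in
set_option maxHeartbeats 1000000 in
lemma norm_formula (a : ℤ) (ρ : ℝ)
    (hroot : ρ ^ 3 - (a : ℝ) * ρ ^ 2 - ((a : ℝ) + 3) * ρ - 1 = 0)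
    (hdeg : Module.finrank ℚ ℚ⟮ρ⟯ = 3) (c0 c1 c2 : ℤ) :
    Algebra.norm ℚ ((c0 : ℚ⟮ρ⟯) + (c1 : ℚ⟮ρ⟯) * AdjoinSimple.gen ℚ ρ
        + (c2 : ℚ⟮ρ⟯) * AdjoinSimple.gen ℚ ρ ^ 2) =
      ((c0^3 + c1^3 + c2^3 - 3*c0*c1^2 - 3*c1*c2^2 + 6*c0^2*c2 + 9*c0*c2^2 - 3*c0*c1*c2
        + a*(c0^2*c1 + 2*c0^2*c2 - c0*c1^2 + c1^2*c2 + 4*c0*c2^2 - c1*c2^2 - 3*c0*c1*c2)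
        + a^2*(c0^2*c2 + c0*c2^2 - c0*c1*c2) : ℤ) : ℚ) := by
  have hint : IsIntegral ℚ ρ := by
    refine ⟨X ^ 3 - (C ((a : ℚ)) * X ^ 2 + C ((a : ℚ) + 3) * X + C 1), ?_, ?_⟩
    · apply Polynomial.monic_X_pow_sub
      refine lt_of_le_of_lt ?_ (by norm_num : (2 : WithBot ℕ) < 3)
      compute_degree
    · simp only [eval₂_sub, eval₂_add, eval₂_mul, eval₂_pow, eval₂_X, eval₂_C, eq_ratCast]
      push_cast
      linear_combination hroot
  set K := ℚ⟮ρ⟯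
  set γ : K := AdjoinSimple.gen ℚ ρ with hγdef
  have hinj : Function.Injective (algebraMap K ℝ) := (algebraMap K ℝ).injective
  have hγ : γ ^ 3 - (a : K) * γ ^ 2 - ((a : K) + 3) * γ - 1 = 0 := by
    apply hinj
    have hg : algebraMap K ℝ γ = ρ := IntermediateField.AdjoinSimple.algebraMap_gen ℚ ρ
    simp only [map_sub, map_mul, map_add, map_pow, map_one, map_intCast, map_zero, map_ofNat, hg]
    linear_combination hroot
  set pb : PowerBasis ℚ K := IntermediateField.adjoin.powerBasis hint with hpb
  have hdim : pb.dim = 3 := pb.finrank.symm.trans hdeg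
  set b : Module.Basis (Fin 3) ℚ K := pb.basis.reindex (finCongr hdim) with hbdef
  have hb : ∀ i : Fin 3, b i = γ ^ (i : ℕ) := by
    intro i
    rw [hbdef, Module.Basis.reindex_apply, pb.basis_eq_pow]
    congr 1
  set x : K := (c0 : K) + (c1 : K) * γ + (c2 : K) * γ ^ 2 with hxdef
  have hsmul : ∀ (q : ℚ) (y : K), q • y = (q : K) * y := fun q y => by
    rw [Algebra.smul_def]; norm_cast
  set M : Matrix (Fin 3) (Fin 3) ℚ :=
    !![(c0 : ℚ), (c2 : ℚ), (c1 : ℚ) + a * c2;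
       (c1 : ℚ), (c0 : ℚ) + ((a : ℚ) + 3) * c2, ((a : ℚ) + 3) * c1 + ((a:ℚ)^2 + 3*a + 1) * c2;
       (c2 : ℚ), (c1 : ℚ) + a * c2, (c0 : ℚ) + a * c1 + ((a:ℚ)^2 + a + 3) * c2] with hMdef
  have key : ∀ j : Fin 3, x * b j = ∑ i : Fin 3, M i j • b i := by
    intro j
    fin_cases j
    · simp only [hb, Fin.sum_univ_three, hMdef, hsmul]
      norm_num [Matrix.cons_val_zero, Matrix.cons_val_one, Matrix.head_cons,
        Matrix.cons_val_two, Matrix.tail_cons]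
      try push_cast
      try linear_combination (0 : K) * hγ
    · simp only [hb, Fin.sum_univ_three, hMdef, hsmul]
      norm_num [Matrix.cons_val_zero, Matrix.cons_val_one, Matrix.head_cons,
        Matrix.cons_val_two, Matrix.tail_cons]
      try push_cast
      linear_combination (c2 : K) * hγ
    · simp only [hb, Fin.sum_univ_three, hMdef, hsmul]
      norm_num [Matrix.cons_val_zero, Matrix.cons_val_one, Matrix.head_cons,
        Matrix.cons_val_two, Matrix.tail_cons]
      try push_cast
      linear_combination ((c1 : K) + (c2 : K) * (a : K) + (c2 : K) * γ) * hγ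
  have hM : Algebra.leftMulMatrix b x = M := by
    ext i j
    rw [Algebra.leftMulMatrix_eq_repr_mul, key j]
    exact congrFun (b.repr_sum_self (fun i => M i j)) i
  rw [Algebra.norm_eq_matrix_det b x, hM, Matrix.det_fin_three]
  norm_num [hMdef, Matrix.cons_val_zero, Matrix.cons_val_one, Matrix.head_cons,
    Matrix.cons_val_two, Matrix.tail_cons]
  push_cast
  ring


/-- Let `a ≥ 5`, `a = 3A + a₀` with `A ≥ 0`, `a₀ ∈ {0,1,2}`. Then
`N(α(v, 3A + a₀ − 2v − 1)) < N(α(v+1, 3A + a₀ − 2(v+1) − 1))` for all integers `v`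
with `0 ≤ v ≤ A−2`. -/
theorem stmt_4 (a A a₀ : ℤ) (ha : 5 ≤ a) (hA : 0 ≤ A)
    (ha₀ : a₀ = 0 ∨ a₀ = 1 ∨ a₀ = 2) (haA : a = 3 * A + a₀)
    (ρ : ℝ) (hroot : ρ ^ 3 - (a : ℝ) * ρ ^ 2 - ((a : ℝ) + 3) * ρ - 1 = 0)
    (hmax : ∀ x : ℝ, x ^ 3 - (a : ℝ) * x ^ 2 - ((a : ℝ) + 3) * x - 1 = 0 → x ≤ ρ)
    (hdeg : Module.finrank ℚ ℚ⟮ρ⟯ = 3)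
    (v : ℤ) (hv0 : 0 ≤ v) (hv1 : v ≤ A - 2) :
    Algebra.norm ℚ (alphaS a ρ v (3 * A + a₀ - 2 * v - 1)) <
      Algebra.norm ℚ (alphaS a ρ (v + 1) (3 * A + a₀ - 2 * (v + 1) - 1)) := by
  have halpha : ∀ u W : ℤ, alphaS a ρ u W =
      ((-u : ℤ) : ℚ⟮ρ⟯) + ((-(u * (a + 2) + 1 + W) : ℤ) : ℚ⟮ρ⟯) * AdjoinSimple.gen ℚ ρ
        + ((u + 1 : ℤ) : ℚ⟮ρ⟯) * AdjoinSimple.gen ℚ ρ ^ 2 := by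
    intro u W
    unfold alphaS
    push_cast
    ring
  rw [halpha, halpha, norm_formula a ρ hroot hdeg, norm_formula a ρ hroot hdeg]
  rw [Int.cast_lt]
  have h₀ : 0 ≤ a₀ := by rcases ha₀ with h | h | h <;> omega
  have hw : 0 ≤ a - 3 * v - 6 := by omega
  rw [show 3 * A + a₀ = a from haA.symm]
  nlinarith [hw, hv0, mul_nonneg hv0 hw, mul_nonneg hw hw, mul_nonneg hv0 (mul_nonneg hw hw),
    mul_nonneg (mul_nonneg hv0 hv0) hw, mul_nonneg hv0 hv0, sq_nonneg (a - 3*v - 6), haA]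
end
end
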